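/- Let L(s) = ∫_0^∞ σ(√s ζ; s) dζ with σ(λ;s) = 1/(1 + exp(λ² − s)). Then L(s) = 1 + O(1/s²) as s → +∞; more precisely, there exist constants C, s₀ > 0 such that |L(s) − 1| ≤ C/s² for all s ≥ s₀. -/

import Mathlib

open MeasureTheory

noncomputable def fermi (τ s : ℝ) : ℝ := 1 / (1 + Real.exp (τ ^ 2 - s))

noncomputable def Lfun (s : ℝ) : ℝ := ∫ ζ in Set.Ioi (0 : ℝ), fermi (Real.sqrt s * ζ) s

/-!
With `g x = 1 / (1 + exp x)` the integrand is `g (s (ζ² - 1))`. As `g (-x) = 1 - g x`, pairing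
`ζ = 1 - u` with `ζ = 1 + u` gives `∫₀² g (s (ζ² - 1)) dζ - 1 = ∫₀¹ (g b - g a) du` with
`a = s (2u - u²) ≥ s u` and `b - a = 2 s u²`. Since `|g b - g a| ≤ (b - a) e⁻ᵃ`, this is at most
`2 s ∫₀^∞ u² e^(-s u) du = 4 / s²`, while the tail `ζ > 2` is `O(e^(-3 s))`.
-/

open Real Set intervalIntegral

theorem intervalIntegral.integral_comp_sub_add_comp_add {E : Type*} [NormedAddCommGroup E]
    [NormedSpace ℝ E] {f : ℝ → E} {a c : ℝ}
    (hf : IntervalIntegrable f volume (a - c) (a + c)) :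
    ∫ u in 0..c, (f (a - u) + f (a + u)) = ∫ x in a - c..a + c, f x := by
  have hmid : a ∈ uIcc (a - c) (a + c) := by
    rw [mem_uIcc]
    rcases le_total 0 c with h | h
    exacts [.inl ⟨by linarith, by linarith⟩, .inr ⟨by linarith, by linarith⟩]
  have hleft : IntervalIntegrable f volume (a - c) a := hf.mono_set (uIcc_subset_uIcc_left hmid)
  have hright : IntervalIntegrable f volume a (a + c) := hf.mono_set (uIcc_subset_uIcc_right hmid)
  have h₁ : IntervalIntegrable (fun u ↦ f (a - u)) volume 0 c := by
    simpa using hleft.symm.comp_sub_left a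
  have h₂ : IntervalIntegrable (fun u ↦ f (a + u)) volume 0 c := by
    simpa using hright.comp_add_left a
  rw [integral_add h₁ h₂, integral_comp_sub_left, integral_comp_add_left, sub_zero, add_zero,
    integral_add_adjacent_intervals hleft hright]

theorem one_div_one_add_exp_neg (x : ℝ) : 1 / (1 + exp (-x)) = 1 - 1 / (1 + exp x) := by
  rw [exp_neg]
  field_simp
  ring

theorem one_div_one_add_exp_le (x : ℝ) : 1 / (1 + exp x) ≤ exp (-x) := by
  rw [exp_neg, one_div]
  gcongr
  linarith

theorem one_div_one_add_exp_sub_le {a b : ℝ} (hab : a ≤ b) :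
    1 / (1 + exp a) - 1 / (1 + exp b) ≤ (b - a) * exp (-a) := by
  calc 1 / (1 + exp a) - 1 / (1 + exp b)
      = (exp b - exp a) / ((1 + exp a) * (1 + exp b)) := by field_simp; ring
    _ ≤ (exp b - exp a) / (exp a * exp b) := by
        gcongr
        · linarith [exp_le_exp.2 hab]
        · linarith
        · linarith
    _ = exp (-a) - exp (-b) := by rw [exp_neg, exp_neg]; field_simp
    _ = exp (-a) * (1 - exp (-(b - a))) := by rw [mul_sub, ← exp_add]; ring_nf
    _ ≤ exp (-a) * (b - a) :=
        mul_le_mul_of_nonneg_left (by linarith [add_one_le_exp (-(b - a))]) (exp_pos _).le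
    _ = (b - a) * exp (-a) := mul_comm _ _

theorem fermi_sqrt_mul {s : ℝ} (hs : 0 ≤ s) (ζ : ℝ) :
    fermi (√s * ζ) s = 1 / (1 + exp (s * (ζ ^ 2 - 1))) := by
  rw [fermi, mul_pow, sq_sqrt hs]
  ring_nf

theorem abs_fermi_pair_sub_one_le {s u : ℝ} (hs : 0 ≤ s) (hu₀ : 0 ≤ u) (hu₁ : u ≤ 1) :
    |fermi (√s * (1 - u)) s + fermi (√s * (1 + u)) s - 1|
      ≤ 2 * s * u ^ 2 * exp (-(s * u)) := by
  have hsa : s * u ≤ s * (2 * u - u ^ 2) := by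
    nlinarith [mul_nonneg (mul_nonneg hs hu₀) (sub_nonneg.2 hu₁)]
  have hab : s * (2 * u - u ^ 2) ≤ s * (2 * u + u ^ 2) := by
    nlinarith [mul_nonneg hs (sq_nonneg u)]
  set a := s * (2 * u - u ^ 2)
  set b := s * (2 * u + u ^ 2)
  have hpair : fermi (√s * (1 - u)) s + fermi (√s * (1 + u)) s - 1
      = -(1 / (1 + exp a) - 1 / (1 + exp b)) := by
    rw [fermi_sqrt_mul hs, fermi_sqrt_mul hs, show s * ((1 - u) ^ 2 - 1) = -a by ring,
      show s * ((1 + u) ^ 2 - 1) = b by ring, one_div_one_add_exp_neg]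
    ring
  have hanti : 1 / (1 + exp b) ≤ 1 / (1 + exp a) := by gcongr
  rw [hpair, abs_neg, abs_of_nonneg (sub_nonneg.2 hanti)]
  calc 1 / (1 + exp a) - 1 / (1 + exp b) ≤ (b - a) * exp (-a) := one_div_one_add_exp_sub_le hab
    _ ≤ 2 * s * u ^ 2 * exp (-(s * u)) := by
      rw [show b - a = 2 * s * u ^ 2 by ring]
      gcongr

theorem fermi_sqrt_mul_le {s : ℝ} (hs : 0 ≤ s) (ζ : ℝ) :
    fermi (√s * ζ) s ≤ exp (s * (1 - ζ ^ 2)) := by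
  rw [fermi_sqrt_mul hs]
  convert one_div_one_add_exp_le _ using 2
  ring

theorem continuous_fermi (s : ℝ) : Continuous fun τ ↦ fermi τ s := by
  unfold fermi
  exact continuous_const.div (by fun_prop) fun τ ↦ by positivity

theorem integrable_fermi_sqrt_mul {s : ℝ} (hs : 0 < s) :
    Integrable fun ζ ↦ fermi (√s * ζ) s := by
  refine ((integrable_exp_neg_mul_sq hs).const_mul (exp s)).mono'
    ((continuous_fermi s).comp (continuous_const_mul _)).aestronglyMeasurable
    (Filter.Eventually.of_forall fun ζ ↦ ?_)
  rw [Real.norm_eq_abs, abs_of_pos (by unfold fermi; positivity), ← exp_add]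
  convert fermi_sqrt_mul_le hs.le ζ using 2
  ring

theorem Lfun_sub_one_eq {s : ℝ} (hs : 0 < s) :
    Lfun s - 1 = (∫ u in 0..1, (fermi (√s * (1 - u)) s + fermi (√s * (1 + u)) s - 1))
      + ∫ ζ in Ioi 2, fermi (√s * ζ) s := by
  have hf := integrable_fermi_sqrt_mul hs
  have hpair : IntervalIntegrable (fun u ↦ fermi (√s * (1 - u)) s + fermi (√s * (1 + u)) s)
      volume 0 1 :=
    (((continuous_fermi s).comp (by fun_prop)).add
      ((continuous_fermi s).comp (by fun_prop))).intervalIntegrable 0 1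
  have hsymm := integral_comp_sub_add_comp_add (f := fun ζ ↦ fermi (√s * ζ) s) (a := 1) (c := 1)
    hf.intervalIntegrable
  norm_num only at hsymm
  rw [Lfun, ← integral_interval_add_Ioi (b := 2) hf.integrableOn hf.integrableOn,
    integral_sub hpair intervalIntegrable_const, hsymm]
  simp only [intervalIntegral.integral_const, sub_zero, smul_eq_mul, mul_one]
  ring

theorem abs_integral_fermi_pair_sub_one_le {s : ℝ} (hs : 0 < s) :
    |∫ u in 0..1, (fermi (√s * (1 - u)) s + fermi (√s * (1 + u)) s - 1)| ≤ 4 / s ^ 2 := by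
  have hpair : Continuous fun u ↦ fermi (√s * (1 - u)) s + fermi (√s * (1 + u)) s - 1 :=
    (((continuous_fermi s).comp (by fun_prop)).add
      ((continuous_fermi s).comp (by fun_prop))).sub continuous_const
  calc |∫ u in 0..1, (fermi (√s * (1 - u)) s + fermi (√s * (1 + u)) s - 1)|
      ≤ ∫ u in 0..1, |fermi (√s * (1 - u)) s + fermi (√s * (1 + u)) s - 1| :=
        abs_integral_le_integral_abs zero_le_one
    _ ≤ ∫ u in 0..1, 2 * s * (u ^ 2 * exp (-(s * u))) :=
        integral_mono_on zero_le_one (hpair.abs.intervalIntegrable 0 1)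
          ((by fun_prop : Continuous fun u ↦ 2 * s * (u ^ 2 * exp (-(s * u)))).intervalIntegrable
            0 1) fun u hu ↦ by
          rw [← mul_assoc]; exact abs_fermi_pair_sub_one_le hs.le hu.1 hu.2
    _ ≤ 2 * s * (2 / s ^ 3) := by
        rw [intervalIntegral.integral_const_mul]
        gcongr
        simpa using intervalIntegral_pow_mul_exp_neg_le (k := 2) zero_le_one hs
    _ = 4 / s ^ 2 := by field_simp; ring

theorem abs_integral_Ioi_two_fermi_le {s : ℝ} (hs : 1 ≤ s) :
    |∫ ζ in Ioi 2, fermi (√s * ζ) s| ≤ 1 / s ^ 2 := by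
  have hs₀ : 0 < s := by linarith
  have hdecay : ∀ ζ ∈ Ioi (2 : ℝ), fermi (√s * ζ) s ≤ exp (2 - 3 * s) * exp (-ζ) := by
    intro ζ (hζ : 2 < ζ)
    refine (fermi_sqrt_mul_le hs₀.le ζ).trans ?_
    rw [← exp_add]
    gcongr
    -- `s (1 - ζ²) = -3 s - s (ζ² - 4)` and `s (ζ² - 4) ≥ ζ² - 4 ≥ ζ - 2`
    have hζ₂ : 0 ≤ (ζ - 2) * (ζ + 2) := mul_nonneg (by linarith) (by linarith)
    nlinarith [mul_nonneg (sub_nonneg.2 hs) hζ₂]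
  rw [abs_of_nonneg (setIntegral_nonneg measurableSet_Ioi fun ζ _ ↦ by unfold fermi; positivity)]
  calc ∫ ζ in Ioi 2, fermi (√s * ζ) s
      ≤ ∫ ζ in Ioi 2, exp (2 - 3 * s) * exp (-ζ) :=
        setIntegral_mono_on (integrable_fermi_sqrt_mul hs₀).integrableOn
          ((integrableOn_exp_neg_Ioi 2).const_mul _) measurableSet_Ioi hdecay
    _ = (exp (3 * s))⁻¹ := by
        rw [MeasureTheory.integral_const_mul, integral_exp_neg_Ioi, ← exp_add, ← exp_neg]
        ring_nf
    _ ≤ 1 / s ^ 2 := by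
        rw [one_div]
        gcongr
        calc s ^ 2 ≤ (3 * s) ^ 2 / 2 := by nlinarith
          _ ≤ exp (3 * s) := by
            simpa using pow_div_factorial_le_exp (x := 3 * s) (by positivity) 2

theorem Lfun_asymptotics :
    ∃ C > (0 : ℝ), ∃ s₀ > (0 : ℝ), ∀ s ≥ s₀, |Lfun s - 1| ≤ C / s ^ 2 := by
  refine ⟨5, by norm_num, 1, one_pos, fun s hs ↦ ?_⟩
  rw [Lfun_sub_one_eq (by linarith)]
  calc _ ≤ 4 / s ^ 2 + 1 / s ^ 2 := (abs_add_le _ _).trans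
        (add_le_add (abs_integral_fermi_pair_sub_one_le (by linarith))
          (abs_integral_Ioi_two_fermi_le hs))
    _ = 5 / s ^ 2 := by ring
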